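/- Consequence for the quadratic form: with B_∘^{-1} as above and ℓ^∘ = (−2w(ρ), −x(2ρ+2α), ℓ¹, ℓ²) where ℓ¹ has first coordinate 0 followed by ℓ¹_♯ and similarly for ℓ², one has ⟨ℓ^∘, ℓ^∘⟩_{B_∘} = ⟨ℓ¹', ℓ¹'⟩_{B_1} + ⟨ℓ²', ℓ²'⟩_{B_2} − 4e⟨ρ,ρ⟩ + 4⟨w(ρ), x(2ρ+2α)⟩, where ℓ^i' is ℓ^i with first coordinate replaced by 2w(ρ). -/
import Mathlib


open Finset

/-- Index type for the splitting-move matrix: basis `(v₀, v_e, u₁,…,u_{n+1}, w₁,…,w_{m+1})`. -/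
abbrev SplitIdx (n m : ℕ) := (Unit ⊕ Unit) ⊕ (Fin (n + 1) ⊕ Fin (m + 1))

/-- The symmetric matrix `B_∘` of the splitting move over `ℚ`. -/
def splitMatQ {n m : ℕ} (e : ℚ) (B1 : Matrix (Fin (n + 1)) (Fin (n + 1)) ℚ)
    (B2 : Matrix (Fin (m + 1)) (Fin (m + 1)) ℚ) :
    Matrix (SplitIdx n m) (SplitIdx n m) ℚ :=
  fun i j =>
    match i, j with
    | Sum.inl (Sum.inl _), Sum.inl (Sum.inl _) => 0
    | Sum.inl (Sum.inl _), Sum.inl (Sum.inr _) => 1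
    | Sum.inl (Sum.inr _), Sum.inl (Sum.inl _) => 1
    | Sum.inl (Sum.inr _), Sum.inl (Sum.inr _) => e
    | Sum.inl (Sum.inl _), Sum.inr _ => 0
    | Sum.inr _, Sum.inl (Sum.inl _) => 0
    | Sum.inl (Sum.inr _), Sum.inr (Sum.inl k) => if k = 0 then 1 else 0
    | Sum.inl (Sum.inr _), Sum.inr (Sum.inr k) => if k = 0 then 1 else 0
    | Sum.inr (Sum.inl k), Sum.inl (Sum.inr _) => if k = 0 then 1 else 0
    | Sum.inr (Sum.inr k), Sum.inl (Sum.inr _) => if k = 0 then 1 else 0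
    | Sum.inr (Sum.inl k), Sum.inr (Sum.inl l) => B1 k l
    | Sum.inr (Sum.inr k), Sum.inr (Sum.inr l) => B2 k l
    | Sum.inr (Sum.inl _), Sum.inr (Sum.inr _) => 0
    | Sum.inr (Sum.inr _), Sum.inr (Sum.inl _) => 0

/-- The pairing `⟨x,y⟩_M := ∑_{i,j} (M⁻¹)_{ij} ⟨x_i,y_j⟩` on tuples of lattice
elements, twisted by the inverse of the matrix `M`. -/
noncomputable def pairM {Q : Type*} [AddCommGroup Q] [Module ℚ Q]
    (bil : Q →ₗ[ℚ] Q →ₗ[ℚ] ℚ) {ι : Type*} [Fintype ι] [DecidableEq ι]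
    (M : Matrix ι ι ℚ) (x y : ι → Q) : ℚ :=
  ∑ i, ∑ j, M⁻¹ i j * bil (x i) (y j)

/-- The tuple `ℓ^∘ = (−2w(ρ), −x(2ρ+2α), ℓ¹, ℓ²)` of the splitting move, where
`p = w(ρ)` and `c = x(2ρ+2α)`. -/
def ellCirc {Q : Type*} [AddCommGroup Q] [Module ℚ Q] {n m : ℕ}
    (p c : Q) (ℓ1 : Fin (n + 1) → Q) (ℓ2 : Fin (m + 1) → Q) :
    SplitIdx n m → Q :=
  fun i =>
    match i with
    | Sum.inl (Sum.inl _) => -((2 : ℚ) • p)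
    | Sum.inl (Sum.inr _) => -c
    | Sum.inr (Sum.inl k) => ℓ1 k
    | Sum.inr (Sum.inr k) => ℓ2 k

/-- The explicit inverse of `B_∘`, in terms of `B₁⁻¹` and `B₂⁻¹`. -/
noncomputable def splitInv {n m : ℕ} (e : ℚ)
    (B1 : Matrix (Fin (n + 1)) (Fin (n + 1)) ℚ)
    (B2 : Matrix (Fin (m + 1)) (Fin (m + 1)) ℚ) :
    Matrix (SplitIdx n m) (SplitIdx n m) ℚ :=
  fun i j =>
    match i, j with
    | Sum.inl (Sum.inl _), Sum.inl (Sum.inl _) => B1⁻¹ 0 0 + B2⁻¹ 0 0 - e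
    | Sum.inl (Sum.inl _), Sum.inl (Sum.inr _) => 1
    | Sum.inl (Sum.inr _), Sum.inl (Sum.inl _) => 1
    | Sum.inl (Sum.inr _), Sum.inl (Sum.inr _) => 0
    | Sum.inl (Sum.inl _), Sum.inr (Sum.inl k) => -(B1⁻¹ 0 k)
    | Sum.inl (Sum.inl _), Sum.inr (Sum.inr k) => -(B2⁻¹ 0 k)
    | Sum.inr (Sum.inl k), Sum.inl (Sum.inl _) => -(B1⁻¹ k 0)
    | Sum.inr (Sum.inr k), Sum.inl (Sum.inl _) => -(B2⁻¹ k 0)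
    | Sum.inl (Sum.inr _), Sum.inr _ => 0
    | Sum.inr _, Sum.inl (Sum.inr _) => 0
    | Sum.inr (Sum.inl k), Sum.inr (Sum.inl l) => B1⁻¹ k l
    | Sum.inr (Sum.inr k), Sum.inr (Sum.inr l) => B2⁻¹ k l
    | Sum.inr (Sum.inl _), Sum.inr (Sum.inr _) => 0
    | Sum.inr (Sum.inr _), Sum.inr (Sum.inl _) => 0

lemma splitMatQ_mul_splitInv {n m : ℕ} (e : ℚ)
    (B1 : Matrix (Fin (n + 1)) (Fin (n + 1)) ℚ)
    (B2 : Matrix (Fin (m + 1)) (Fin (m + 1)) ℚ)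
    (hu1 : IsUnit B1.det) (hu2 : IsUnit B2.det) :
    splitMatQ e B1 B2 * splitInv e B1 B2 = 1 := by
  have h1 : B1 * B1⁻¹ = 1 := Matrix.mul_nonsing_inv B1 hu1
  have h2 : B2 * B2⁻¹ = 1 := Matrix.mul_nonsing_inv B2 hu2
  have h1' : ∀ k l, ∑ x, B1 k x * B1⁻¹ x l = if k = l then 1 else 0 := by
    intro k l; rw [← Matrix.mul_apply, h1, Matrix.one_apply]
  have h2' : ∀ k l, ∑ x, B2 k x * B2⁻¹ x l = if k = l then 1 else 0 := by
    intro k l; rw [← Matrix.mul_apply, h2, Matrix.one_apply]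
  ext i j
  rw [Matrix.mul_apply]
  rcases i with (_ | _) | (k | k) <;> rcases j with (_ | _) | (l | l) <;>
    (try simp only [Fintype.sum_sum_type, Fintype.sum_unique, splitMatQ, splitInv,
      Matrix.one_apply, mul_zero, zero_mul, one_mul, mul_one, mul_neg, neg_mul,
      neg_neg, ite_mul, mul_ite, zero_add, add_zero, Finset.sum_const_zero,
      Finset.sum_neg_distrib, neg_zero,
      Finset.sum_ite_eq, Finset.sum_ite_eq', Finset.mem_univ, if_true,
      Sum.inl.injEq, Sum.inr.injEq, h1', h2']) <;>
    (try first
      | rfl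
      | ring
      | (split_ifs <;> simp_all))
  all_goals simp

lemma splitMatQ_inv {n m : ℕ} (e : ℚ)
    (B1 : Matrix (Fin (n + 1)) (Fin (n + 1)) ℚ)
    (B2 : Matrix (Fin (m + 1)) (Fin (m + 1)) ℚ)
    (hu1 : IsUnit B1.det) (hu2 : IsUnit B2.det) :
    (splitMatQ e B1 B2)⁻¹ = splitInv e B1 B2 :=
  Matrix.inv_eq_right_inv (splitMatQ_mul_splitInv e B1 B2 hu1 hu2)

lemma pairM_update {Q : Type*} [AddCommGroup Q] [Module ℚ Q]
    (bil : Q →ₗ[ℚ] Q →ₗ[ℚ] ℚ) {n : ℕ}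
    (B : Matrix (Fin (n + 1)) (Fin (n + 1)) ℚ)
    (ℓ : Fin (n + 1) → Q) (hℓ : ℓ 0 = 0) (v : Q) :
    pairM bil B (Function.update ℓ 0 v) (Function.update ℓ 0 v)
      = pairM bil B ℓ ℓ + ∑ j, B⁻¹ 0 j * bil v (ℓ j)
        + ∑ i, B⁻¹ i 0 * bil (ℓ i) v + B⁻¹ 0 0 * bil v v := by
  unfold pairM
  simp only [Fin.sum_univ_succ, Function.update_self,
    Function.update_of_ne (Fin.succ_ne_zero _), hℓ, map_zero, LinearMap.zero_apply,
    mul_zero, zero_add, add_zero, Finset.sum_const_zero, Finset.sum_add_distrib]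
  ring

/-- Quadratic-form consequence of the explicit inverse of `B_∘`.  With `w`, `x`
isometries of the bilinear form (elements of the Weyl group), Weyl vector `ρ`,
`α ∈ Q`, and `ℓ^∘ = (−2w(ρ), −x(2ρ+2α), ℓ¹, ℓ²)` where `ℓ¹`, `ℓ²` have first
coordinate `0`, one has
`⟨ℓ^∘,ℓ^∘⟩_{B_∘} = ⟨ℓ¹',ℓ¹'⟩_{B₁} + ⟨ℓ²',ℓ²'⟩_{B₂} − 4e⟨ρ,ρ⟩ + 4⟨w(ρ), x(2ρ+2α)⟩`,
where `ℓⁱ'` is `ℓⁱ` with first coordinate replaced by `2w(ρ)`. -/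
theorem splitting_quadratic_form
    {Q : Type*} [AddCommGroup Q] [Module ℚ Q]
    (bil : Q →ₗ[ℚ] Q →ₗ[ℚ] ℚ) (hsymm : ∀ x y, bil x y = bil y x)
    {n m : ℕ} (e : ℚ)
    (B1 : Matrix (Fin (n + 1)) (Fin (n + 1)) ℚ)
    (B2 : Matrix (Fin (m + 1)) (Fin (m + 1)) ℚ)
    (hs1 : B1.IsSymm) (hs2 : B2.IsSymm)
    (hu1 : IsUnit B1.det) (hu2 : IsUnit B2.det)
    (huc : IsUnit (splitMatQ e B1 B2).det)
    (w x : Q →ₗ[ℚ] Q)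
    (hw : ∀ u v : Q, bil (w u) (w v) = bil u v)
    (hx : ∀ u v : Q, bil (x u) (x v) = bil u v)
    (ρ α : Q)
    (ℓ1 : Fin (n + 1) → Q) (hℓ1 : ℓ1 0 = 0)
    (ℓ2 : Fin (m + 1) → Q) (hℓ2 : ℓ2 0 = 0) :
    pairM bil (splitMatQ e B1 B2)
        (ellCirc (w ρ) (x ((2 : ℚ) • ρ + (2 : ℚ) • α)) ℓ1 ℓ2)
        (ellCirc (w ρ) (x ((2 : ℚ) • ρ + (2 : ℚ) • α)) ℓ1 ℓ2) =
      pairM bil B1 (Function.update ℓ1 0 ((2 : ℚ) • w ρ))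
          (Function.update ℓ1 0 ((2 : ℚ) • w ρ))
        + pairM bil B2 (Function.update ℓ2 0 ((2 : ℚ) • w ρ))
            (Function.update ℓ2 0 ((2 : ℚ) • w ρ))
        - 4 * e * bil ρ ρ
        + 4 * bil (w ρ) (x ((2 : ℚ) • ρ + (2 : ℚ) • α)) := by
  rw [pairM_update bil B1 ℓ1 hℓ1, pairM_update bil B2 ℓ2 hℓ2]
  unfold pairM
  rw [splitMatQ_inv e B1 B2 hu1 hu2]
  simp only [Fintype.sum_sum_type, Fintype.sum_unique, splitInv, ellCirc,
    map_neg, map_smul, map_add, LinearMap.neg_apply, LinearMap.smul_apply,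
    LinearMap.add_apply, smul_eq_mul, hw,
    mul_zero, zero_mul, one_mul, mul_one, mul_neg, neg_mul, neg_neg, neg_zero,
    zero_add, add_zero, Finset.sum_const_zero, Finset.sum_add_distrib,
    Finset.sum_neg_distrib]
  rw [hsymm (x ρ) (w ρ), hsymm (x α) (w ρ)]
  simp only [show ∀ a b : ℚ, a * (2 * b) = 2 * (a * b) from fun a b => by ring,
    show ∀ a b : ℚ, a * b * 2 = 2 * (a * b) from fun a b => by ring,
    show ∀ a b : ℚ, a * 2 * b = 2 * (a * b) from fun a b => by ring]
  ring
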